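/- arXiv:1809.08351 — 2 statements merged into one kernel-verified Lean document; each statement's English description precedes it below -/
import Mathlib

section
/- Let R = K[x_0,...,x_m] and S = K[y_0,...,y_n] be polynomial rings over a field K of characteristic zero, let M be a finitely generated graded R-module and N a finitely generated graded S-module, both of positive Krull dimension. Then dim(M ⊗_ N) = dim(M) + dim(N) − 1 and e(M ⊗_ N) = C(dim(M)+dim(N)−2, dim(M)−1) · e(M) · e(N), where ⊗_ denotes the Segre product and C(·,·) a binomial coefficient. -/
open MvPolynomial Filter

noncomputable section


/-- The Hilbert function of the standard graded quotient of a polynomial ring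
by an ideal `I`: the `K`-dimension of the image of the space of homogeneous
polynomials of degree `k` in the quotient. -/
def hilbertFn {σ : Type} (K : Type) [Field K] (I : Ideal (MvPolynomial σ K)) (k : ℕ) : ℕ :=
  Module.finrank K
    ((MvPolynomial.homogeneousSubmodule σ K k).map (Ideal.Quotient.mkₐ K I).toLinearMap)

/-- `e` is the multiplicity of a graded module with Hilbert function `H`:
for `k ≫ 0`, `H k` agrees with a polynomial whose leading coefficient is
`e/(d-1)!`, where `d - 1` is its degree. -/
def IsMultiplicityOf (H : ℕ → ℕ) (e : ℕ) : Prop :=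
  ∃ p : Polynomial ℚ, (∀ᶠ k in atTop, (H k : ℚ) = p.eval (k : ℚ)) ∧
    p.leadingCoeff * (Nat.factorial p.natDegree : ℚ) = (e : ℚ)

/-- `d` is the dimension of a graded module with Hilbert function `H`:
for `k ≫ 0`, `H k` agrees with a polynomial of degree `d - 1`. -/
def IsHilbDimOf (H : ℕ → ℕ) (d : ℕ) : Prop :=
  ∃ p : Polynomial ℚ, (∀ᶠ k in atTop, (H k : ℚ) = p.eval (k : ℚ)) ∧
    ((p = 0 ∧ d = 0) ∨ (p ≠ 0 ∧ d = p.natDegree + 1))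

/-- The irrelevant (graded maximal) ideal of a polynomial ring. -/
def mvIrrelevant (σ : Type) (K : Type) [Field K] : Ideal (MvPolynomial σ K) :=
  Ideal.span (Set.range (X : σ → MvPolynomial σ K))

/-- An ideal of a polynomial ring is homogeneous (graded) if it contains all
homogeneous components of its elements. -/
def IdealIsHomog {σ : Type} {K : Type} [Field K] (I : Ideal (MvPolynomial σ K)) : Prop :=
  ∀ f ∈ I, ∀ n : ℕ, MvPolynomial.homogeneousComponent n f ∈ I

/-- `β` is the table of graded Betti numbers of `S/I`, i.e. there is a minimal
graded free resolution `⋯ → F₁ → F₀ → S/I → 0` in which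
`F i = ⊕_j S(-j)^(β i j)`.  The `i`-th free module is realized as
`(Σ j, Fin (β i j)) →₀ S`, the basis element `⟨j, t⟩` having internal degree `j`;
a map of graded free modules is graded precisely when the `⟨j', t'⟩`-coordinate
of the image of the basis element `⟨j, t⟩` is homogeneous of degree `j - j'`
(and vanishes when `j' > j`), and minimality means that all differentials have
image inside the irrelevant ideal times the free module. -/
def IsBettiTableOf {σ : Type} (K : Type) [Field K] (I : Ideal (MvPolynomial σ K))
    (β : ℕ → ℕ → ℕ) : Prop :=
  {q : ℕ × ℕ | β q.1 q.2 ≠ 0}.Finite ∧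
  ∃ (d : (i : ℕ) →
      ((Σ j : ℕ, Fin (β (i + 1) j)) →₀ MvPolynomial σ K) →ₗ[MvPolynomial σ K]
        ((Σ j : ℕ, Fin (β i j)) →₀ MvPolynomial σ K))
    (ε : ((Σ j : ℕ, Fin (β 0 j)) →₀ MvPolynomial σ K) →ₗ[MvPolynomial σ K]
        (MvPolynomial σ K ⧸ I)),
    Function.Surjective ε ∧
    LinearMap.ker ε = LinearMap.range (d 0) ∧
    (∀ i, LinearMap.ker (d i) = LinearMap.range (d (i + 1))) ∧
    (∀ i, LinearMap.range (d i) ≤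
      (mvIrrelevant σ K) • (⊤ : Submodule (MvPolynomial σ K)
        ((Σ j : ℕ, Fin (β i j)) →₀ MvPolynomial σ K))) ∧
    (∀ (i j j' : ℕ) (t : Fin (β (i + 1) j)) (t' : Fin (β i j')),
      (d i (Finsupp.single ⟨j, t⟩ 1)) ⟨j', t'⟩ ∈
          MvPolynomial.homogeneousSubmodule σ K (j - j') ∧
        (j < j' → (d i (Finsupp.single ⟨j, t⟩ 1)) ⟨j', t'⟩ = 0)) ∧
    (∀ (j : ℕ) (t : Fin (β 0 j)), ∃ g ∈ MvPolynomial.homogeneousSubmodule σ K j,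
      ε (Finsupp.single ⟨j, t⟩ 1) = Ideal.Quotient.mk I g)

/-- The Castelnuovo–Mumford regularity `max {j - i : β i j ≠ 0}` encoded by a
Betti table. -/
def regOfBetti (β : ℕ → ℕ → ℕ) : ℕ :=
  sSup {r : ℕ | ∃ i j, β i j ≠ 0 ∧ j = i + r}

set_option synthInstance.maxHeartbeats 1000000 in
/-- The quotient of a polynomial ring by a (homogeneous) ideal is
Cohen–Macaulay: there is a regular sequence, inside the graded maximal ideal,
whose length is the Krull dimension of the quotient. -/
def QuotIsCM {σ : Type} (K : Type) [Field K] (I : Ideal (MvPolynomial σ K)) : Prop :=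
  ∃ rs : List (MvPolynomial σ K ⧸ I),
    (∀ x ∈ rs, x ∈ Ideal.map (Ideal.Quotient.mk I) (mvIrrelevant σ K)) ∧
    RingTheory.Sequence.IsRegular (MvPolynomial σ K ⧸ I) rs ∧
    (rs.length : WithBot (WithTop ℕ)) = ringKrullDim (MvPolynomial σ K ⧸ I)

/-- The Hilbert function of the special fiber ring `F(I) = ⊕_l I^l/m I^l`:
`l ↦ dim_K I^l / m I^l`. -/
def fiberHilbert {σ : Type} (K : Type) [Field K] (I : Ideal (MvPolynomial σ K)) (l : ℕ) : ℕ :=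
  Module.finrank K
    ((Submodule.restrictScalars K ((I ^ l : Ideal (MvPolynomial σ K)) :
        Submodule (MvPolynomial σ K) (MvPolynomial σ K))) ⧸
      (Submodule.comap
        (Submodule.restrictScalars K ((I ^ l : Ideal (MvPolynomial σ K)) :
          Submodule (MvPolynomial σ K) (MvPolynomial σ K))).subtype
        (Submodule.restrictScalars K (((mvIrrelevant σ K * I ^ l : Ideal (MvPolynomial σ K)) :
          Submodule (MvPolynomial σ K) (MvPolynomial σ K))))))

/-- A monomial order on the exponent vectors: a strict total order compatible
with addition for which `0` is the least element. -/
structure IsMonomialOrder {σ : Type} (lt : (σ →₀ ℕ) → (σ →₀ ℕ) → Prop) : Prop where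
  irrefl : ∀ a, ¬ lt a a
  trans : ∀ a b c, lt a b → lt b c → lt a c
  total : ∀ a b, a ≠ b → lt a b ∨ lt b a
  add_right : ∀ a b c, lt a b → lt (a + c) (b + c)
  zero_lt : ∀ a, a ≠ 0 → lt 0 a

/-- The initial ideal of `J` with respect to a monomial order `lt`: the ideal
generated by the leading monomials of the elements of `J`. -/
def initialIdeal {σ : Type} (K : Type) [Field K] (lt : (σ →₀ ℕ) → (σ →₀ ℕ) → Prop)
    (J : Ideal (MvPolynomial σ K)) : Ideal (MvPolynomial σ K) :=
  Ideal.span {m : MvPolynomial σ K | ∃ f ∈ J, ∃ a ∈ f.support,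
    (∀ b ∈ f.support, b = a ∨ lt b a) ∧ m = MvPolynomial.monomial a (1 : K)}


lemma poly_eq_of_eventually_eq (p q : Polynomial ℚ)
    (h : ∀ᶠ k : ℕ in atTop, p.eval (k : ℚ) = q.eval (k : ℚ)) : p = q := by
  rw [← sub_eq_zero]
  apply Polynomial.eq_zero_of_infinite_isRoot
  obtain ⟨k0, hk0⟩ := Filter.eventually_atTop.1 h
  refine Set.infinite_of_injective_forall_mem (f := fun n : ℕ => ((n + k0 : ℕ) : ℚ)) ?_ ?_
  · intro a b hab
    have := Nat.cast_injective (R := ℚ) hab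
    omega
  · intro n
    simp only [Set.mem_setOf_eq, Polynomial.IsRoot, Polynomial.eval_sub, sub_eq_zero]
    exact hk0 _ (Nat.le_add_left _ _)

open scoped TensorProduct in
/-- Let `M` and `N` be finitely generated graded modules of
positive dimension over the polynomial rings `R = K[x_0, …, x_m]` and
`S = K[y_0, …, y_n]` respectively.  The Hilbert function of the Segre product
`M ⊗_ N = ⊕_ℓ M_ℓ ⊗_K N_ℓ` is `ℓ ↦ dim_K (M_ℓ ⊗_K N_ℓ)`; its dimension is
`dim M + dim N - 1`, and its multiplicity is
`C(dim M + dim N - 2, dim M - 1) ⬝ e(M) ⬝ e(N)`. -/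
theorem segre_product_dim_and_multiplicity
    (K : Type) [Field K] [CharZero K] (m n : ℕ)
    (M N : Type) [AddCommGroup M] [AddCommGroup N]
    [Module (MvPolynomial (Fin (m + 1)) K) M] [Module (MvPolynomial (Fin (n + 1)) K) N]
    [Module K M] [Module K N]
    [IsScalarTower K (MvPolynomial (Fin (m + 1)) K) M]
    [IsScalarTower K (MvPolynomial (Fin (n + 1)) K) N]
    [Module.Finite (MvPolynomial (Fin (m + 1)) K) M]
    [Module.Finite (MvPolynomial (Fin (n + 1)) K) N]
    (gM : ℕ → Submodule K M) (gN : ℕ → Submodule K N)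
    (hMtop : (⨆ ℓ, gM ℓ) = ⊤) (hMind : iSupIndep gM)
    (hMgr : ∀ i ℓ : ℕ, ∀ r ∈ MvPolynomial.homogeneousSubmodule (Fin (m + 1)) K i,
      ∀ x ∈ gM ℓ, r • x ∈ gM (i + ℓ))
    (hNtop : (⨆ ℓ, gN ℓ) = ⊤) (hNind : iSupIndep gN)
    (hNgr : ∀ i ℓ : ℕ, ∀ r ∈ MvPolynomial.homogeneousSubmodule (Fin (n + 1)) K i,
      ∀ y ∈ gN ℓ, r • y ∈ gN (i + ℓ))
    (dM dN eM eN : ℕ) (hdM : 1 ≤ dM) (hdN : 1 ≤ dN)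
    (hMdim : IsHilbDimOf (fun ℓ => Module.finrank K ↥(gM ℓ)) dM)
    (hMe : IsMultiplicityOf (fun ℓ => Module.finrank K ↥(gM ℓ)) eM)
    (hNdim : IsHilbDimOf (fun ℓ => Module.finrank K ↥(gN ℓ)) dN)
    (hNe : IsMultiplicityOf (fun ℓ => Module.finrank K ↥(gN ℓ)) eN) :
    IsHilbDimOf (fun ℓ => Module.finrank K (↥(gM ℓ) ⊗[K] ↥(gN ℓ))) (dM + dN - 1) ∧
    IsMultiplicityOf (fun ℓ => Module.finrank K (↥(gM ℓ) ⊗[K] ↥(gN ℓ)))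
      (Nat.choose (dM + dN - 2) (dM - 1) * (eM * eN)) := by
  classical
  obtain ⟨pM, hpM, hpMd⟩ := hMdim
  obtain ⟨pN, hpN, hpNd⟩ := hNdim
  obtain ⟨qM, hqM, hqMe⟩ := hMe
  obtain ⟨qN, hqN, hqNe⟩ := hNe
  -- the polynomials agree
  have hqMpM : pM = qM := poly_eq_of_eventually_eq _ _ <| by
    filter_upwards [hpM, hqM] with k h1 h2; rw [← h1, ← h2]
  have hqNpN : pN = qN := poly_eq_of_eventually_eq _ _ <| by
    filter_upwards [hpN, hqN] with k h1 h2; rw [← h1, ← h2]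
  subst hqMpM hqNpN
  have hpM0 : pM ≠ 0 := by
    rcases hpMd with ⟨_, h⟩ | ⟨h, _⟩
    · omega
    · exact h
  have hpN0 : pN ≠ 0 := by
    rcases hpNd with ⟨_, h⟩ | ⟨h, _⟩
    · omega
    · exact h
  have hdMeq : dM = pM.natDegree + 1 := by
    rcases hpMd with ⟨_, h⟩ | ⟨_, h⟩
    · omega
    · exact h
  have hdNeq : dN = pN.natDegree + 1 := by
    rcases hpNd with ⟨_, h⟩ | ⟨_, h⟩
    · omega
    · exact h
  -- Hilbert function of the Segre product
  have hH : ∀ᶠ k : ℕ in atTop,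
      ((fun ℓ => Module.finrank K (↥(gM ℓ) ⊗[K] ↥(gN ℓ))) k : ℚ) =
        (pM * pN).eval (k : ℚ) := by
    filter_upwards [hpM, hpN] with k h1 h2
    simp only [Module.finrank_tensorProduct, Nat.cast_mul, Polynomial.eval_mul, h1, h2]
  have hprod0 : pM * pN ≠ 0 := mul_ne_zero hpM0 hpN0
  constructor
  · exact ⟨pM * pN, hH, Or.inr ⟨hprod0, by
      rw [Polynomial.natDegree_mul hpM0 hpN0]; omega⟩⟩
  · refine ⟨pM * pN, hH, ?_⟩
    rw [Polynomial.leadingCoeff_mul, Polynomial.natDegree_mul hpM0 hpN0]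
    have hd2 : dM + dN - 2 = pM.natDegree + pN.natDegree := by omega
    have hd1 : dM - 1 = pM.natDegree := by omega
    have key : (pM.natDegree + pN.natDegree).choose pM.natDegree *
        Nat.factorial pM.natDegree * Nat.factorial pN.natDegree =
        Nat.factorial (pM.natDegree + pN.natDegree) :=
      by rw [Nat.choose_symm_add]; exact Nat.add_choose_mul_factorial_mul_factorial _ _
    rw [hd2, hd1]
    push_cast [← key]
    rw [← hqMe, ← hqNe]
    ring
end
end

section
/- For every integer p ≥ 4, let D be the smallest three-dimensional Ferrers diagram containing the lattice points (1,2,p−1), (2,3,p−2), (3,4,p−3), ..., (p−1,p,1), (p,1,2) and (2,1,p−1), (3,2,p−2), (4,3,p−3), ..., (p,p−1,1), (1,p,2). Then the minimal generating set of the toric ideal J_D contains a binomial of degree p. -/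
open MvPolynomial Filter

noncomputable section


/-- The set of first coordinates occurring in the diagram. -/
def xsOf (D : Finset (ℕ × ℕ × ℕ)) : Finset ℕ := D.image (fun u => u.1)

/-- The set of second coordinates occurring in the diagram. -/
def ysOf (D : Finset (ℕ × ℕ × ℕ)) : Finset ℕ := D.image (fun u => u.2.1)

/-- The set of third coordinates occurring in the diagram. -/
def zsOf (D : Finset (ℕ × ℕ × ℕ)) : Finset ℕ := D.image (fun u => u.2.2)

/-- The essential length of a diagram. -/
def aOf (D : Finset (ℕ × ℕ × ℕ)) : ℕ := (xsOf D).card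

/-- The essential width of a diagram. -/
def bOf (D : Finset (ℕ × ℕ × ℕ)) : ℕ := (ysOf D).card

/-- The essential height of a diagram. -/
def cOf (D : Finset (ℕ × ℕ × ℕ)) : ℕ := (zsOf D).card

/-- A nonempty finite set of lattice points in `ℤ₊³` that is closed under
coordinatewise decrease (within `ℤ₊³`). -/
def IsFerrers (D : Finset (ℕ × ℕ × ℕ)) : Prop :=
  D.Nonempty ∧ (∀ u ∈ D, 1 ≤ u.1 ∧ 1 ≤ u.2.1 ∧ 1 ≤ u.2.2) ∧
    ∀ u ∈ D, ∀ i j k : ℕ, 1 ≤ i → i ≤ u.1 → 1 ≤ j → j ≤ u.2.1 → 1 ≤ k → k ≤ u.2.2 →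
      (i, j, k) ∈ D

/-- The projection property for a three-dimensional Ferrers diagram. -/
def HasProjProp (D : Finset (ℕ × ℕ × ℕ)) : Prop :=
  ∀ i : ℕ, 1 ≤ i → ∀ j₁ k₁ j₂ k₂ : ℕ,
    (i + 1, j₁, k₁) ∈ D → (i + 1, j₂, k₂) ∈ D → (i, j₁, k₂) ∈ D

/-- The `x = i` layer of a diagram. -/
def layerOf (D : Finset (ℕ × ℕ × ℕ)) (i : ℕ) : Finset (ℕ × ℕ × ℕ) :=
  D.filter (fun u => u.1 = i)

/-- The strong projection property for a three-dimensional Ferrers diagram. -/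
def HasStrongProjProp (D : Finset (ℕ × ℕ × ℕ)) : Prop :=
  ∀ i : ℕ, 1 ≤ i → i + 1 ≤ aOf D →
    (bOf (layerOf D (i + 1)) = 1 ∨ (i, bOf (layerOf D (i + 1)), cOf (layerOf D i)) ∈ D) ∧
    (cOf (layerOf D (i + 1)) = 1 ∨ (i, bOf (layerOf D i), cOf (layerOf D (i + 1))) ∈ D)

/-- The monomial `x_i y_j z_k` associated to the point `u = (i,j,k)` of `D`,
in the polynomial ring whose variables are indexed by the coordinates
occurring in `D`. -/
def ptMonomial (K : Type) [Field K] (D : Finset (ℕ × ℕ × ℕ)) (u : ↥D) :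
    MvPolynomial (↥(xsOf D) ⊕ ↥(ysOf D) ⊕ ↥(zsOf D)) K :=
  X (Sum.inl ⟨u.1.1, Finset.mem_image_of_mem _ u.2⟩) *
    X (Sum.inr (Sum.inl ⟨u.1.2.1, Finset.mem_image_of_mem _ u.2⟩)) *
    X (Sum.inr (Sum.inr ⟨u.1.2.2, Finset.mem_image_of_mem _ u.2⟩))

/-- The defining (monomial) ideal `I_D = (x_i y_j z_k : (i,j,k) ∈ D)`. -/
def defIdeal (K : Type) [Field K] (D : Finset (ℕ × ℕ × ℕ)) :
    Ideal (MvPolynomial (↥(xsOf D) ⊕ ↥(ysOf D) ⊕ ↥(zsOf D)) K) :=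
  Ideal.span (Set.range (ptMonomial K D))

/-- The presentation `K[T_D] → K[x,y,z]`, `T_{(i,j,k)} ↦ x_i y_j z_k`, of the
toric ring of `I_D`. -/
def toricMap (K : Type) [Field K] (D : Finset (ℕ × ℕ × ℕ)) :
    MvPolynomial (↥D) K →ₐ[K] MvPolynomial (↥(xsOf D) ⊕ ↥(ysOf D) ⊕ ↥(zsOf D)) K :=
  MvPolynomial.aeval (ptMonomial K D)

/-- The toric ideal (special fiber ideal) `J_D = ker (T_{(i,j,k)} ↦ x_i y_j z_k)`. -/
def toricIdeal (K : Type) [Field K] (D : Finset (ℕ × ℕ × ℕ)) : Ideal (MvPolynomial (↥D) K) :=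
  RingHom.ker (toricMap K D)

/-- The (strict) lexicographic order on lattice points. -/
def ptLT (u v : ℕ × ℕ × ℕ) : Prop :=
  u.1 < v.1 ∨ (u.1 = v.1 ∧ (u.2.1 < v.2.1 ∨ (u.2.1 = v.2.1 ∧ u.2.2 < v.2.2)))

/-- The lexicographic order on monomials (exponent vectors) of `K[T_D]`, where
the variables `T_u` are ordered by the lexicographic order on the points of
`D` (`T_u > T_v` when `u` lexicographically precedes `v`). -/
def expLexLT {D : Finset (ℕ × ℕ × ℕ)} (a b : ↥D →₀ ℕ) : Prop :=
  ∃ u : ↥D, (∀ v : ↥D, ptLT v.1 u.1 → a v = b v) ∧ a u < b u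

/-- The initial ideal of the toric ideal `J_D` with respect to the
lexicographic order: the ideal generated by all lexicographically leading
monomials of elements of `J_D`. -/
def lexInitialIdeal (K : Type) [Field K] (D : Finset (ℕ × ℕ × ℕ)) :
    Ideal (MvPolynomial (↥D) K) :=
  Ideal.span {m : MvPolynomial (↥D) K | ∃ f ∈ toricIdeal K D, ∃ a ∈ f.support,
    (∀ b ∈ f.support, b = a ∨ expLexLT b a) ∧ m = MvPolynomial.monomial a (1 : K)}

/-- The Stanley–Reisner simplicial complex `Δ(D)` associated to the squarefree
lexicographic initial ideal of `J_D`: the faces are the subsets `F` of `D`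
whose squarefree monomial does not lie in the initial ideal. -/
def srComplex (K : Type) [Field K] (D : Finset (ℕ × ℕ × ℕ)) : Set (Finset ↥D) :=
  {F : Finset ↥D |
    MvPolynomial.monomial (∑ u ∈ F, Finsupp.single u 1) (1 : K) ∉ lexInitialIdeal K D}


/-- The set of extremal lattice points governing the diagram of STATEMENT 17. -/
def extremalPts (p : ℕ) : Finset (ℕ × ℕ × ℕ) :=
  ((Finset.Icc 1 (p - 1)).image (fun t => (t, t + 1, p - t))) ∪
    ((Finset.Icc 1 (p - 1)).image (fun t => (t + 1, t, p - t))) ∪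
    {(p, 1, 2), (1, p, 2)}

open Classical in
/-- The smallest three-dimensional Ferrers diagram containing the extremal
points: the coordinatewise-decrease closure of `extremalPts p` in `ℤ₊³`. -/
def govDiagram (p : ℕ) : Finset (ℕ × ℕ × ℕ) :=
  (Finset.Icc 1 p ×ˢ Finset.Icc 1 p ×ˢ Finset.Icc 1 p).filter
    (fun u => ∃ v ∈ extremalPts p, u.1 ≤ v.1 ∧ u.2.1 ≤ v.2.1 ∧ u.2.2 ≤ v.2.2)

/-!
The binomial is `T^A - T^B`, where `T^A` is the product of the `T_u` over the cycle
`(t, t+1, p-t)`, `(p, 1, 2)` of generators of `D` and `T^B` over its mirror image under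
`x ↔ y`. A monomial of the same multidegree picks one point of `D` in each row and in each
column, with heights `p-1, …, 3, 2, 2, 1`; the shape of `D` then forces the point of height
`p - t` onto `(t, t+1)` or onto its mirror, so the fiber of the multidegree is `{A, B}`. As `A`
and `B` share no variable, the coefficient of `T^A` vanishes on the ideal generated by the
elements of `J_D` of degree `< p`.
-/

section MonomialMap

variable {σ τ R : Type*} [CommSemiring R] (w : σ → τ →₀ ℕ)

theorem aeval_monomial_monomial (C : σ →₀ ℕ) (c : R) :
    aeval (fun s => monomial (w s) (1 : R)) (monomial C c) =
      monomial (Finsupp.linearCombination ℕ w C) c := by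
  rw [aeval_monomial, Finsupp.linearCombination_apply, monomial_finsupp_sum_index,
    algebraMap_eq]
  simp [monomial_pow]

theorem coeff_aeval_monomial [DecidableEq τ] (g : MvPolynomial σ R) (ν : τ →₀ ℕ) :
    coeff ν (aeval (fun s => monomial (w s) (1 : R)) g) =
      ∑ C ∈ g.support with Finsupp.linearCombination ℕ w C = ν, coeff C g := by
  conv_lhs => rw [g.as_sum, map_sum]
  simp only [aeval_monomial_monomial, coeff_sum, coeff_monomial, Finset.sum_ite,
    Finset.sum_const_zero, add_zero]

theorem coeff_mul_eq_zero_of_fiber_subset {A B : σ →₀ ℕ}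
    (hfib : ∀ E, Finsupp.linearCombination ℕ w E = Finsupp.linearCombination ℕ w A →
      E = A ∨ E = B)
    (hAB : Disjoint A B) {g : MvPolynomial σ R}
    (hg : g ∈ RingHom.ker (aeval (fun s => monomial (w s) (1 : R))))
    (hgA : coeff A g = 0) (r : MvPolynomial σ R) : coeff A (r * g) = 0 := by
  classical
  rw [coeff_mul]
  refine Finset.sum_eq_zero fun ⟨m, C⟩ hmC => ?_
  rw [Finset.HasAntidiagonal.mem_antidiagonal] at hmC
  dsimp only at hmC ⊢
  suffices hC : coeff C g = 0 by rw [hC, mul_zero]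
  by_contra hC
  have hm : m ≠ 0 := by rintro rfl; rw [zero_add] at hmC; exact hC (hmC ▸ hgA)
  -- `m + C'` lies in the fiber of `A`; it is not `B`, as then `0 ≠ m ≤ A ⊓ B`
  have hfiber : {C' ∈ g.support | Finsupp.linearCombination ℕ w C' =
      Finsupp.linearCombination ℕ w C} = {C} := by
    refine Finset.eq_singleton_iff_unique_mem.2 ⟨by simpa using hC, fun C' hC' => ?_⟩
    have hmu : Finsupp.linearCombination ℕ w (m + C') = Finsupp.linearCombination ℕ w A := by
      rw [← hmC, map_add, map_add, (Finset.mem_filter.1 hC').2]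
    rcases hfib _ hmu with h | h
    · exact add_left_cancel (h.trans hmC.symm)
    · exact absurd (disjoint_self.1 (hAB.mono (hmC ▸ le_self_add) (h ▸ le_self_add))) hm
  have hsum := coeff_aeval_monomial w g (Finsupp.linearCombination ℕ w C)
  rw [hfiber, Finset.sum_singleton, (RingHom.mem_ker).1 hg, coeff_zero] at hsum
  exact hC hsum.symm

theorem coeff_eq_zero_of_mem_span {A : σ →₀ ℕ} {S : Set (MvPolynomial σ R)}
    (hS : ∀ g ∈ S, ∀ r, coeff A (r * g) = 0) {f : MvPolynomial σ R}
    (hf : f ∈ Ideal.span S) : coeff A f = 0 := by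
  suffices ∀ r, coeff A (r * f) = 0 by simpa using this 1
  induction hf using Submodule.span_induction with
  | mem g hg => exact hS g hg
  | zero => simp
  | add a b _ _ ha hb => intro r; rw [mul_add, coeff_add, ha, hb, add_zero]
  | smul c a _ ha => intro r; rw [smul_eq_mul, ← mul_assoc]; exact ha _

end MonomialMap

theorem monomial_sub_monomial_notMem_span_of_degree_lt {σ τ R : Type*} [CommRing R]
    [Nontrivial R] (w : σ → τ →₀ ℕ) {A B : σ →₀ ℕ}
    (hfib : ∀ E, Finsupp.linearCombination ℕ w E = Finsupp.linearCombination ℕ w A →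
      E = A ∨ E = B)
    (hAB : Disjoint A B) (hA : A ≠ 0) :
    monomial A (1 : R) - monomial B 1 ∉ Ideal.span
      {g | g ∈ RingHom.ker (aeval (fun s => monomial (w s) (1 : R))) ∧
        ∃ d < A.degree, g ∈ homogeneousSubmodule σ R d} := by
  classical
  intro hmem
  have h := coeff_eq_zero_of_mem_span (hf := hmem) fun g hg => by
    obtain ⟨hg, d, hd, hhom⟩ := hg
    exact coeff_mul_eq_zero_of_fiber_subset w hfib hAB hg
      (((mem_homogeneousSubmodule _ _).1 hhom).coeff_eq_zero hd.ne')
  rw [coeff_sub, coeff_monomial, coeff_monomial, if_pos rfl, if_neg (hAB.ne hA).symm,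
    sub_zero] at h
  exact one_ne_zero h

theorem Finsupp.mapDomain_eq_mapDomain_iff {ι κ : Type*} (f : ι → κ) (E E' : ι →₀ ℕ) :
    E.mapDomain f = E'.mapDomain f ↔ E.toMultiset.map f = E'.toMultiset.map f := by
  classical
  rw [Finsupp.toMultiset_map, Finsupp.toMultiset_map,
    (Function.LeftInverse.injective Finsupp.toMultiset_toFinsupp).eq_iff]

def ptsOf {α : Type*} {P : α → Prop} (E : Subtype P →₀ ℕ) : Multiset α :=
  E.toMultiset.map Subtype.val

section FinsetExp

variable {α : Type*} [DecidableEq α]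

theorem ptsOf_injective {P : α → Prop} : Function.Injective (ptsOf (P := P)) := by
  intro E E' h
  rw [← Finsupp.toMultiset_toFinsupp E, ← Finsupp.toMultiset_toFinsupp E',
    (Multiset.map_injective Subtype.val_injective) h]

def finsetExp (D S : Finset α) : D →₀ ℕ := Multiset.toFinsupp (S.subtype (· ∈ D)).val

theorem ptsOf_finsetExp {D S : Finset α} (h : S ⊆ D) : ptsOf (finsetExp D S) = S.val := by
  rw [ptsOf, finsetExp, Multiset.toFinsupp_toMultiset]
  have := congrArg Finset.val (Finset.subtype_map (· ∈ D) (s := S))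
  rwa [Finset.map_val, Finset.filter_true_of_mem h] at this

theorem degree_finsetExp {D S : Finset α} (h : S ⊆ D) : (finsetExp D S).degree = S.card := by
  rw [← Finset.card_val, ← ptsOf_finsetExp h, ptsOf, Multiset.card_map,
    Finsupp.card_toMultiset, Finsupp.degree_apply]
  rfl

theorem disjoint_finsetExp {D S T : Finset α} (h : Disjoint S T) :
    Disjoint (finsetExp D S) (finsetExp D T) := by
  rw [Finsupp.disjoint_iff, finsetExp, finsetExp, Multiset.toFinsupp_support,
    Multiset.toFinsupp_support, Finset.val_toFinset, Finset.val_toFinset]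
  exact Finset.disjoint_left.2 fun u hS hT =>
    Finset.disjoint_left.1 h (Finset.mem_subtype.1 hS) (Finset.mem_subtype.1 hT)

end FinsetExp

section PointMonomials

variable (D : Finset (ℕ × ℕ × ℕ))

def xVar (u : D) : xsOf D := ⟨u.1.1, Finset.mem_image_of_mem _ u.2⟩

def yVar (u : D) : ysOf D := ⟨u.1.2.1, Finset.mem_image_of_mem _ u.2⟩

def zVar (u : D) : zsOf D := ⟨u.1.2.2, Finset.mem_image_of_mem _ u.2⟩

def ptExp (u : D) : (xsOf D ⊕ ysOf D ⊕ zsOf D) →₀ ℕ :=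
  Finsupp.single (Sum.inl (xVar D u)) 1 + Finsupp.single (Sum.inr (Sum.inl (yVar D u))) 1 +
    Finsupp.single (Sum.inr (Sum.inr (zVar D u))) 1

theorem toricMap_eq_aeval (K : Type) [Field K] :
    toricMap K D = aeval (fun u => monomial (ptExp D u) (1 : K)) := by
  rw [toricMap]
  congr 1
  funext u
  rw [ptMonomial, ptExp, X, X, X, monomial_mul, monomial_mul, one_mul, one_mul]
  rfl

theorem linearCombination_ptExp (E : D →₀ ℕ) :
    Finsupp.linearCombination ℕ (ptExp D) E =
      (E.mapDomain (xVar D)).mapDomain Sum.inl +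
        ((E.mapDomain (yVar D)).mapDomain Sum.inl).mapDomain Sum.inr +
        ((E.mapDomain (zVar D)).mapDomain Sum.inr).mapDomain Sum.inr := by
  induction E using Finsupp.induction_linear with
  | zero => simp
  | add E E' hE hE' => simp only [map_add, Finsupp.mapDomain_add, hE, hE']; abel
  | single u n => simp [ptExp, Finsupp.mapDomain_single]

theorem linearCombination_ptExp_eq_iff (E E' : D →₀ ℕ) :
    Finsupp.linearCombination ℕ (ptExp D) E = Finsupp.linearCombination ℕ (ptExp D) E' ↔
      (ptsOf E).map Prod.fst = (ptsOf E').map Prod.fst ∧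
      (ptsOf E).map (·.2.1) = (ptsOf E').map (·.2.1) ∧
      (ptsOf E).map (·.2.2) = (ptsOf E').map (·.2.2) := by
  have key : ∀ {S : Finset ℕ} (c : D → S) (g : ℕ × ℕ × ℕ → ℕ), (∀ u, (c u).1 = g u.1) →
      (E.mapDomain c = E'.mapDomain c ↔ (ptsOf E).map g = (ptsOf E').map g) := by
    intro S c g hcg
    rw [Finsupp.mapDomain_eq_mapDomain_iff,
      ← (Multiset.map_injective Subtype.val_injective).eq_iff, ptsOf, ptsOf]
    simp only [Multiset.map_map, Function.comp_def, hcg]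
  rw [← key (xVar D) _ fun _ => rfl, ← key (yVar D) _ fun _ => rfl,
    ← key (zVar D) _ fun _ => rfl, linearCombination_ptExp, linearCombination_ptExp]
  refine ⟨fun h => ⟨?_, ?_, ?_⟩, fun ⟨hx, hy, hz⟩ => by rw [hx, hy, hz]⟩ <;> ext a
  · simpa [Finsupp.mapDomain_apply Sum.inl_injective, Finsupp.mapDomain_of_notMem_range]
      using congrArg (· (Sum.inl a)) h
  · simpa [Finsupp.mapDomain_apply Sum.inl_injective, Finsupp.mapDomain_apply Sum.inr_injective,
      Finsupp.mapDomain_of_notMem_range] using congrArg (· (Sum.inr (Sum.inl a))) h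
  · simpa [Finsupp.mapDomain_apply Sum.inr_injective, Finsupp.mapDomain_of_notMem_range]
      using congrArg (· (Sum.inr (Sum.inr a))) h

end PointMonomials

/-- The three alternatives: `(t, j, k)` lies below some `(s, s+1, p-s)`, below some
`(s+1, s, p-s)`, or below `(1, p, 2)` or `(p, 1, 2)`. -/
theorem mem_govDiagram {p : ℕ} (hp : 2 ≤ p) {t j k : ℕ} :
    (t, j, k) ∈ govDiagram p ↔ 1 ≤ t ∧ t ≤ p ∧ 1 ≤ j ∧ j ≤ p ∧ 1 ≤ k ∧
      (k + t ≤ p ∧ k + j ≤ p + 1 ∨ k + j ≤ p ∧ k + t ≤ p + 1 ∨ (t = 1 ∨ j = 1) ∧ k ≤ 2) := by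
  rw [govDiagram, Finset.mem_filter]
  simp only [extremalPts, Finset.mem_product, Finset.mem_Icc,
    Finset.mem_union, Finset.mem_image, Finset.mem_insert, Finset.mem_singleton]
  constructor
  · rintro ⟨⟨⟨ht, htp⟩, ⟨hj, hjp⟩, hk, hkp⟩, v, hv, hvt, hvj, hvk⟩
    rcases hv with (⟨s, hs, rfl⟩ | ⟨s, hs, rfl⟩) | rfl | rfl <;> dsimp only at * <;> omega
  · rintro ⟨ht, htp, hj, hjp, hk, h | h | h⟩
    · exact ⟨by omega, _, Or.inl (Or.inl ⟨p - k, by omega, rfl⟩), by dsimp only; omega⟩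
    · exact ⟨by omega, _, Or.inl (Or.inr ⟨p - k, by omega, rfl⟩), by dsimp only; omega⟩
    · rcases h with ⟨rfl | rfl, hk2⟩
      · exact ⟨by omega, _, Or.inr (Or.inr rfl), by dsimp only; omega⟩
      · exact ⟨by omega, _, Or.inr (Or.inl rfl), by dsimp only; omega⟩

def swapXY (u : ℕ × ℕ × ℕ) : ℕ × ℕ × ℕ := (u.2.1, u.1, u.2.2)

theorem swapXY_swapXY (u : ℕ × ℕ × ℕ) : swapXY (swapXY u) = u := rfl

theorem mem_image_swapXY {S : Finset (ℕ × ℕ × ℕ)} {u : ℕ × ℕ × ℕ} :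
    u ∈ S.image swapXY ↔ swapXY u ∈ S :=
  ⟨fun h => by obtain ⟨v, hv, rfl⟩ := Finset.mem_image.1 h; exact hv,
    fun h => Finset.mem_image.2 ⟨_, h, swapXY_swapXY u⟩⟩

theorem image_swapXY_image_swapXY (S : Finset (ℕ × ℕ × ℕ)) :
    (S.image swapXY).image swapXY = S := by
  ext u; rw [mem_image_swapXY, mem_image_swapXY, swapXY_swapXY]

theorem image_swapXY_val (S : Finset (ℕ × ℕ × ℕ)) :
    (S.image swapXY).val = S.val.map swapXY :=
  Finset.image_val_of_injOn fun u _ v _ h => by rw [← swapXY_swapXY u, h, swapXY_swapXY]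

theorem swapXY_mem_govDiagram {p : ℕ} (hp : 2 ≤ p) {u : ℕ × ℕ × ℕ} (hu : u ∈ govDiagram p) :
    swapXY u ∈ govDiagram p := by
  obtain ⟨t, j, k⟩ := u
  rw [mem_govDiagram hp] at hu
  show (j, t, k) ∈ govDiagram p
  rw [mem_govDiagram hp]
  omega

/-- Row `t` of the generators `(1,2,p-1), …, (p-1,p,1), (p,1,2)` of `D`. -/
def upperPt (p t : ℕ) : ℕ × ℕ × ℕ := if t = p then (p, 1, 2) else (t, t + 1, p - t)

def upperCycle (p : ℕ) : Finset (ℕ × ℕ × ℕ) := (Finset.Icc 1 p).image (upperPt p)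

def lowerCycle (p : ℕ) : Finset (ℕ × ℕ × ℕ) := (upperCycle p).image swapXY

theorem upperPt_fst (p t : ℕ) : (upperPt p t).1 = t := by
  unfold upperPt; split_ifs with h <;> simp [h]

theorem upperCycle_val (p : ℕ) : (upperCycle p).val = (Finset.Icc 1 p).val.map (upperPt p) :=
  Finset.image_val_of_injOn fun s _ t _ h => by rw [← upperPt_fst p s, h, upperPt_fst]

theorem upperCycle_val_map_fst (p : ℕ) :
    (upperCycle p).val.map Prod.fst = (Finset.Icc 1 p).val := by
  rw [upperCycle_val, Multiset.map_map]
  exact (Multiset.map_congr rfl fun t _ => upperPt_fst p t).trans (Multiset.map_id _)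

theorem upperCycle_val_map_snd_fst (p : ℕ) :
    (upperCycle p).val.map (·.2.1) = (Finset.Icc 1 p).val := by
  have hinj : Set.InjOn (fun t => (upperPt p t).2.1) (Finset.Icc 1 p) := by
    intro s hs t ht h
    simp only [Finset.coe_Icc, Set.mem_Icc, upperPt] at hs ht h
    split_ifs at h <;> dsimp only at h <;> omega
  rw [upperCycle_val, Multiset.map_map, Function.comp_def, ← Finset.image_val_of_injOn hinj]
  congr 1
  ext j
  simp only [Finset.mem_image, Finset.mem_Icc, upperPt]
  constructor
  · rintro ⟨t, ht, rfl⟩; split_ifs <;> dsimp only <;> omega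
  · intro hj
    refine ⟨if j = 1 then p else j - 1, by split_ifs <;> omega, ?_⟩
    split_ifs <;> dsimp only <;> omega

theorem count_upperCycle_val_map_snd_snd (p k : ℕ) :
    ((upperCycle p).val.map (·.2.2)).count k =
      ((Finset.Icc 1 p).filter fun t => k = (upperPt p t).2.2).card := by
  rw [upperCycle_val, Multiset.map_map, Multiset.count_map]
  rfl

/-- The squarefree monomial `∏_{u ∈ S} T_u` of `K[T_D]` has the multidegree of
`∏_{u ∈ upperCycle p} T_u`. -/
structure IsCycleFiber (p : ℕ) (S : Finset (ℕ × ℕ × ℕ)) : Prop where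
  subset : S ⊆ govDiagram p
  map_fst : S.val.map Prod.fst = (Finset.Icc 1 p).val
  map_snd_fst : S.val.map (·.2.1) = (Finset.Icc 1 p).val
  map_snd_snd : S.val.map (·.2.2) = (upperCycle p).val.map (·.2.2)

namespace IsCycleFiber

variable {p : ℕ} {S : Finset (ℕ × ℕ × ℕ)}

theorem image_swapXY (hp : 2 ≤ p) (hS : IsCycleFiber p S) : IsCycleFiber p (S.image swapXY) where
  subset u hu := by
    rw [← swapXY_swapXY u]
    exact swapXY_mem_govDiagram hp (hS.subset (mem_image_swapXY.1 hu))
  map_fst := by rw [image_swapXY_val, Multiset.map_map]; exact hS.map_snd_fst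
  map_snd_fst := by rw [image_swapXY_val, Multiset.map_map]; exact hS.map_fst
  map_snd_snd := by rw [image_swapXY_val, Multiset.map_map]; exact hS.map_snd_snd

theorem bounds (hp : 2 ≤ p) (hS : IsCycleFiber p S) {t j k : ℕ} (hu : (t, j, k) ∈ S) :
    1 ≤ t ∧ t ≤ p ∧ 1 ≤ j ∧ j ≤ p ∧ 1 ≤ k ∧
      (k + t ≤ p ∧ k + j ≤ p + 1 ∨ k + j ≤ p ∧ k + t ≤ p + 1 ∨ (t = 1 ∨ j = 1) ∧ k ≤ 2) :=
  (mem_govDiagram hp).1 (hS.subset hu)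

theorem eq_of_fst_eq (hS : IsCycleFiber p S) {u v : ℕ × ℕ × ℕ} (hu : u ∈ S) (hv : v ∈ S)
    (h : u.1 = v.1) : u = v :=
  Multiset.inj_on_of_nodup_map (hS.map_fst ▸ (Finset.Icc 1 p).nodup) u hu v hv h

theorem eq_of_snd_fst_eq (hS : IsCycleFiber p S) {u v : ℕ × ℕ × ℕ} (hu : u ∈ S) (hv : v ∈ S)
    (h : u.2.1 = v.2.1) : u = v :=
  Multiset.inj_on_of_nodup_map (hS.map_snd_fst ▸ (Finset.Icc 1 p).nodup) u hu v hv h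

theorem exists_fst (hS : IsCycleFiber p S) {t : ℕ} (h1 : 1 ≤ t) (h2 : t ≤ p) :
    ∃ j k, (t, j, k) ∈ S := by
  obtain ⟨⟨t', j, k⟩, hu, rfl⟩ := Multiset.mem_map.1 (show t ∈ S.val.map Prod.fst by
    rw [hS.map_fst, Finset.mem_val, Finset.mem_Icc]; exact ⟨h1, h2⟩)
  exact ⟨j, k, hu⟩

theorem exists_snd_fst (hS : IsCycleFiber p S) {j : ℕ} (h1 : 1 ≤ j) (h2 : j ≤ p) :
    ∃ t k, (t, j, k) ∈ S := by
  obtain ⟨⟨t, j', k⟩, hu, rfl⟩ := Multiset.mem_map.1 (show j ∈ S.val.map (·.2.1) by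
    rw [hS.map_snd_fst, Finset.mem_val, Finset.mem_Icc]; exact ⟨h1, h2⟩)
  exact ⟨t, k, hu⟩

theorem exists_snd_snd (hS : IsCycleFiber p S) {k : ℕ} (h1 : 3 ≤ k) (h2 : k < p) :
    ∃ t j, (t, j, k) ∈ S := by
  obtain ⟨⟨t, j, k'⟩, hu, rfl⟩ := Multiset.mem_map.1 (show k ∈ S.val.map (·.2.2) by
    rw [hS.map_snd_snd, Multiset.mem_map]
    refine ⟨upperPt p (p - k), Finset.mem_image_of_mem (upperPt p)
      (Finset.mem_Icc.2 (show 1 ≤ p - k ∧ p - k ≤ p by omega)), ?_⟩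
    rw [upperPt, if_neg (by omega)]
    dsimp only; omega)
  exact ⟨t, j, hu⟩

theorem card_filter_snd_snd (hS : IsCycleFiber p S) (k : ℕ) :
    (S.filter fun u => k = u.2.2).card =
      ((Finset.Icc 1 p).filter fun t => k = (upperPt p t).2.2).card := by
  rw [← count_upperCycle_val_map_snd_snd, ← hS.map_snd_snd, Multiset.count_map]
  rfl

theorem exists_pair_snd_snd_eq_two (hp : 3 ≤ p) (hS : IsCycleFiber p S) :
    ∃ u ∈ S, ∃ v ∈ S, u ≠ v ∧ u.2.2 = 2 ∧ v.2.2 = 2 := by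
  have h : ((Finset.Icc 1 p).filter fun t => 2 = (upperPt p t).2.2) = {p - 2, p} := by
    ext t
    rw [Finset.mem_filter, Finset.mem_Icc, Finset.mem_insert, Finset.mem_singleton, upperPt]
    split_ifs <;> dsimp only <;> omega
  have hc : (S.filter fun u => 2 = u.2.2).card = 2 := by
    rw [hS.card_filter_snd_snd, h, Finset.card_pair (by omega)]
  obtain ⟨u, v, huv, he⟩ := Finset.card_eq_two.1 hc
  have hu : u ∈ S.filter fun u => 2 = u.2.2 := by simp [he]
  have hv : v ∈ S.filter fun u => 2 = u.2.2 := by simp [he]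
  rw [Finset.mem_filter] at hu hv
  exact ⟨u, hu.1, v, hv.1, huv, hu.2.symm, hv.2.symm⟩

theorem eq_of_snd_snd_eq_one (hp : 2 ≤ p) (hS : IsCycleFiber p S) {u v : ℕ × ℕ × ℕ}
    (hu : u ∈ S) (hv : v ∈ S) (hu1 : u.2.2 = 1) (hv1 : v.2.2 = 1) : u = v := by
  have h : ((Finset.Icc 1 p).filter fun t => 1 = (upperPt p t).2.2) = {p - 1} := by
    ext t
    rw [Finset.mem_filter, Finset.mem_Icc, Finset.mem_singleton, upperPt]
    split_ifs <;> dsimp only <;> omega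
  have hc : (S.filter fun u => 1 = u.2.2).card ≤ 1 := by
    rw [hS.card_filter_snd_snd, h, Finset.card_singleton]
  exact Finset.card_le_one.1 hc u (by simp [hu, hu1]) v (by simp [hv, hv1])

/-- The point with `z = p - t` is forced, row by row, onto the upper cyclic diagonal: the
heights bound `max(x, y) ≤ t + 1`, while the rows `< t` and the columns `≤ t` are used up. -/
theorem mem_of_le_sub_three (hS : IsCycleFiber p S) {c₀ : ℕ} (hc₀ : (p, 1, c₀) ∈ S) :
    ∀ t, 1 ≤ t → t ≤ p - 3 → (t, t + 1, p - t) ∈ S := by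
  intro t
  induction t using Nat.strong_induction_on with
  | _ t ih =>
  intro ht htp
  obtain ⟨a, b, hu⟩ := hS.exists_snd_snd (k := p - t) (by omega) (by omega)
  have hmem := hS.bounds (by omega) hu
  have ha : t ≤ a := by
    by_contra h
    have := hS.eq_of_fst_eq hu (ih a (by omega) (by omega) (by omega)) rfl
    simp only [Prod.mk.injEq] at this
    omega
  have hb : t + 1 ≤ b := by
    by_contra h
    rcases Nat.lt_or_ge b 2 with hb | hb
    · have := hS.eq_of_snd_fst_eq hu hc₀ (by dsimp only; omega)
      simp only [Prod.mk.injEq] at this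
      omega
    · have := hS.eq_of_snd_fst_eq hu (ih (b - 1) (by omega) (by omega) (by omega))
        (by dsimp only; omega)
      simp only [Prod.mk.injEq] at this
      omega
  obtain ⟨rfl, rfl⟩ : a = t ∧ b = t + 1 := by omega
  exact hu

theorem fst_eq_or_le_of_snd_fst_le (hp : 2 ≤ p) (hS : IsCycleFiber p S) {c₀ : ℕ}
    (hc₀ : (p, 1, c₀) ∈ S) {a b c : ℕ} (hu : (a, b, c) ∈ S) (hb : b ≤ p - 2) :
    a = p ∨ a ≤ p - 3 := by
  have := hS.bounds (by omega) hu
  rcases Nat.lt_or_ge b 2 with hb1 | hb1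
  · have h := hS.eq_of_snd_fst_eq hu hc₀ (by dsimp only; omega)
    simp only [Prod.mk.injEq] at h
    omega
  · have h := hS.eq_of_snd_fst_eq hu (hS.mem_of_le_sub_three hc₀ (b - 1) (by omega) (by omega))
      (by dsimp only; omega)
    simp only [Prod.mk.injEq] at h
    omega

theorem three_le_of_fst_le (hp : 2 ≤ p) (hS : IsCycleFiber p S) {c₀ : ℕ}
    (hc₀ : (p, 1, c₀) ∈ S) {a b c : ℕ} (hu : (a, b, c) ∈ S) (ha : a ≤ p - 3) : 3 ≤ c := by
  have := hS.bounds (by omega) hu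
  have h := hS.eq_of_fst_eq hu (hS.mem_of_le_sub_three hc₀ a (by omega) ha) rfl
  simp only [Prod.mk.injEq] at h
  omega

theorem last_rows_mem (hp : 4 ≤ p) (hS : IsCycleFiber p S) {c₀ : ℕ} (hc₀ : (p, 1, c₀) ∈ S) :
    (p - 2, p - 1, 2) ∈ S ∧ (p - 1, p, 1) ∈ S ∧ c₀ = 2 := by
  obtain ⟨b₁, c₁, h₁⟩ := hS.exists_fst (t := p - 1) (by omega) (by omega)
  have hb₁ := hS.fst_eq_or_le_of_snd_fst_le (by omega) hc₀ h₁
  obtain rfl : c₁ = 1 := by have := hS.bounds (by omega) h₁; omega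
  have htwo : ∀ {a b}, (a, b, 2) ∈ S → a = p - 2 ∨ a = p := fun {a b} hu => by
    have := hS.three_le_of_fst_le (by omega) hc₀ hu
    have := hS.bounds (by omega) hu
    by_contra hne
    have h := hS.eq_of_fst_eq hu h₁ (show a = p - 1 by omega)
    simp only [Prod.mk.injEq] at h
    omega
  have hpiv : ∀ {b}, (p, b, 2) ∈ S → c₀ = 2 := fun hu => by
    have h := hS.eq_of_fst_eq hu hc₀ rfl
    simp only [Prod.mk.injEq] at h
    omega
  obtain ⟨⟨b₂, h₂⟩, rfl⟩ : (∃ b₂, (p - 2, b₂, 2) ∈ S) ∧ c₀ = 2 := by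
    obtain ⟨⟨a, b, c⟩, hu, ⟨a', b', c'⟩, hv, huv, rfl, rfl⟩ :=
      hS.exists_pair_snd_snd_eq_two (by omega)
    rcases htwo hu with rfl | rfl <;> rcases htwo hv with rfl | rfl
    · exact absurd (hS.eq_of_fst_eq hu hv rfl) huv
    · exact ⟨⟨b, hu⟩, hpiv hv⟩
    · exact ⟨⟨b', hv⟩, hpiv hu⟩
    · exact absurd (hS.eq_of_fst_eq hu hv rfl) huv
  obtain rfl : b₂ = p - 1 := by
    have := hS.fst_eq_or_le_of_snd_fst_le (by omega) hc₀ h₂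
    have := hS.bounds (by omega) h₂
    omega
  have h := hS.eq_of_snd_fst_eq h₁ h₂
  simp only [Prod.mk.injEq] at h
  obtain rfl : b₁ = p := by have := hS.bounds (by omega) h₁; omega
  exact ⟨h₂, h₁, rfl⟩

theorem upperPt_mem (hp : 4 ≤ p) (hS : IsCycleFiber p S) {c₀ : ℕ} (hc₀ : (p, 1, c₀) ∈ S)
    {t : ℕ} (ht : 1 ≤ t) (htp : t ≤ p) : upperPt p t ∈ S := by
  obtain ⟨h₂, h₁, rfl⟩ := hS.last_rows_mem hp hc₀
  unfold upperPt
  split_ifs with h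
  · exact hc₀
  · rcases (show t ≤ p - 3 ∨ t = p - 2 ∨ t = p - 1 by omega) with h' | rfl | rfl
    · exact hS.mem_of_le_sub_three hc₀ t ht h'
    · rwa [show p - 2 + 1 = p - 1 by omega, show p - (p - 2) = 2 by omega]
    · rwa [show p - 1 + 1 = p by omega, show p - (p - 1) = 1 by omega]

theorem eq_upperCycle (hp : 4 ≤ p) (hS : IsCycleFiber p S) {c₀ : ℕ} (hc₀ : (p, 1, c₀) ∈ S) :
    S = upperCycle p := by
  ext ⟨t, j, k⟩
  constructor
  · intro hu
    have := hS.bounds (by omega) hu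
    have h := hS.eq_of_fst_eq hu (hS.upperPt_mem hp hc₀ (t := t) (by omega) (by omega))
      (upperPt_fst p t).symm
    rw [h]
    exact Finset.mem_image_of_mem _ (Finset.mem_Icc.2 ⟨by omega, by omega⟩)
  · intro hu
    obtain ⟨s, hs, hs'⟩ := Finset.mem_image.1 hu
    rw [Finset.mem_Icc] at hs
    exact hs' ▸ hS.upperPt_mem hp hc₀ hs.1 hs.2

theorem eq_upperCycle_or_eq_lowerCycle (hp : 4 ≤ p) (hS : IsCycleFiber p S) :
    S = upperCycle p ∨ S = lowerCycle p := by
  obtain ⟨a, c, hu⟩ := hS.exists_snd_fst (j := p) (by omega) le_rfl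
  have hmem := hS.bounds (by omega) hu
  by_cases ha : a = 1
  · subst ha
    right
    rw [lowerCycle, ← hS.image_swapXY (by omega) |>.eq_upperCycle hp
      (mem_image_swapXY.2 hu), image_swapXY_image_swapXY]
  · left
    obtain ⟨b, c', hv⟩ := hS.exists_fst (t := p) (by omega) le_rfl
    have hmem' := hS.bounds (by omega) hv
    have hb : b ≠ p := fun hb => by
      have h := hS.eq_of_snd_fst_eq hu hv hb.symm
      simp only [Prod.mk.injEq] at h
      omega
    -- unless `b = 1`, both `(a, p, c)` and `(p, b, c')` have height `1`
    by_cases hb1 : b = 1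
    · exact hS.eq_upperCycle hp (hb1 ▸ hv)
    · have h := hS.eq_of_snd_snd_eq_one (by omega) hu hv (by dsimp only; omega)
        (by dsimp only; omega)
      simp only [Prod.mk.injEq] at h
      omega

end IsCycleFiber

theorem upperCycle_subset {p : ℕ} (hp : 2 ≤ p) : upperCycle p ⊆ govDiagram p := by
  intro u hu
  obtain ⟨t, ht, rfl⟩ := Finset.mem_image.1 hu
  rw [Finset.mem_Icc] at ht
  unfold upperPt
  split_ifs
  · exact (mem_govDiagram hp).2 (by omega)
  · exact (mem_govDiagram hp).2 (by omega)

theorem lowerCycle_subset {p : ℕ} (hp : 2 ≤ p) : lowerCycle p ⊆ govDiagram p := by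
  intro u hu
  rw [← swapXY_swapXY u]
  exact swapXY_mem_govDiagram hp (upperCycle_subset hp (mem_image_swapXY.1 hu))

theorem card_upperCycle (p : ℕ) : (upperCycle p).card = p := by
  rw [upperCycle, Finset.card_image_of_injective _ fun s t h => by
    rw [← upperPt_fst p s, h, upperPt_fst], Nat.card_Icc, Nat.add_sub_cancel]

theorem card_lowerCycle (p : ℕ) : (lowerCycle p).card = p := by
  rw [lowerCycle, Finset.card_image_of_injective _ fun u v h => by
    rw [← swapXY_swapXY u, h, swapXY_swapXY], card_upperCycle]

theorem disjoint_upperCycle_lowerCycle {p : ℕ} (hp : 3 ≤ p) :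
    Disjoint (upperCycle p) (lowerCycle p) := by
  refine Finset.disjoint_left.2 fun u hu hl => ?_
  obtain ⟨s, hs, rfl⟩ := Finset.mem_image.1 hu
  obtain ⟨t, ht, h⟩ := Finset.mem_image.1 (mem_image_swapXY.1 hl)
  rw [Finset.mem_Icc] at hs ht
  unfold upperPt swapXY at h
  split_ifs at h <;> simp only [Prod.mk.injEq] at h <;> omega

def upperExp (p : ℕ) : govDiagram p →₀ ℕ := finsetExp (govDiagram p) (upperCycle p)

def lowerExp (p : ℕ) : govDiagram p →₀ ℕ := finsetExp (govDiagram p) (lowerCycle p)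

theorem linearCombination_upperExp_eq_lowerExp {p : ℕ} (hp : 2 ≤ p) :
    Finsupp.linearCombination ℕ (ptExp _) (upperExp p) =
      Finsupp.linearCombination ℕ (ptExp _) (lowerExp p) := by
  rw [linearCombination_ptExp_eq_iff, upperExp, lowerExp, ptsOf_finsetExp (upperCycle_subset hp),
    ptsOf_finsetExp (lowerCycle_subset hp), lowerCycle, image_swapXY_val]
  simp only [Multiset.map_map, Function.comp_def, swapXY, and_true]
  exact ⟨(upperCycle_val_map_fst p).trans (upperCycle_val_map_snd_fst p).symm,
    (upperCycle_val_map_snd_fst p).trans (upperCycle_val_map_fst p).symm⟩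

theorem eq_upperExp_or_eq_lowerExp {p : ℕ} (hp : 4 ≤ p) (E : govDiagram p →₀ ℕ)
    (hE : Finsupp.linearCombination ℕ (ptExp _) E =
      Finsupp.linearCombination ℕ (ptExp _) (upperExp p)) :
    E = upperExp p ∨ E = lowerExp p := by
  rw [linearCombination_ptExp_eq_iff, upperExp, ptsOf_finsetExp (upperCycle_subset (by omega)),
    upperCycle_val_map_fst, upperCycle_val_map_snd_fst] at hE
  obtain ⟨hx, hy, hz⟩ := hE
  let S : Finset (ℕ × ℕ × ℕ) := ⟨ptsOf E, .of_map _ (hx ▸ (Finset.Icc 1 p).nodup)⟩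
  have hS : IsCycleFiber p S := by
    refine ⟨fun u hu => ?_, hx, hy, hz⟩
    obtain ⟨v, -, rfl⟩ := Multiset.mem_map.1 hu
    exact v.2
  rcases hS.eq_upperCycle_or_eq_lowerCycle hp with h | h
  · left
    rw [← ptsOf_injective.eq_iff, upperExp, ptsOf_finsetExp (upperCycle_subset (by omega)), ← h]
  · right
    rw [← ptsOf_injective.eq_iff, lowerExp, ptsOf_finsetExp (lowerCycle_subset (by omega)), ← h]

theorem degree_upperExp {p : ℕ} (hp : 2 ≤ p) : (upperExp p).degree = p :=
  (degree_finsetExp (upperCycle_subset hp)).trans (card_upperCycle p)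

theorem degree_lowerExp {p : ℕ} (hp : 2 ≤ p) : (lowerExp p).degree = p :=
  (degree_finsetExp (lowerCycle_subset hp)).trans (card_lowerCycle p)

theorem disjoint_upperExp_lowerExp {p : ℕ} (hp : 3 ≤ p) : Disjoint (upperExp p) (lowerExp p) :=
  disjoint_finsetExp (disjoint_upperCycle_lowerCycle hp)

theorem toric_ideal_has_degree_p_minimal_binomial_general
    (K : Type) [Field K] (p : ℕ) (hp : 4 ≤ p) :
    ∃ f ∈ toricIdeal K (govDiagram p),
      (∃ A B : ↥(govDiagram p) →₀ ℕ, A ≠ B ∧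
        f = MvPolynomial.monomial A (1 : K) - MvPolynomial.monomial B (1 : K)) ∧
      f ∈ MvPolynomial.homogeneousSubmodule (↥(govDiagram p)) K p ∧
      f ∉ Ideal.span {g : MvPolynomial (↥(govDiagram p)) K |
        g ∈ toricIdeal K (govDiagram p) ∧
          ∃ d : ℕ, d < p ∧ g ∈ MvPolynomial.homogeneousSubmodule (↥(govDiagram p)) K d} := by
  have hup := degree_upperExp (show 2 ≤ p by omega)
  have hdisj := disjoint_upperExp_lowerExp (show 3 ≤ p by omega)
  have hne : upperExp p ≠ 0 := fun h => by rw [h, map_zero] at hup; omega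
  refine ⟨_, ?_, ⟨upperExp p, lowerExp p, hdisj.ne hne, rfl⟩, ?_, ?_⟩
  · rw [toricIdeal, RingHom.mem_ker, toricMap_eq_aeval, map_sub, aeval_monomial_monomial,
      aeval_monomial_monomial, linearCombination_upperExp_eq_lowerExp (by omega), sub_self]
  · exact Submodule.sub_mem _ (isHomogeneous_monomial _ hup)
      (isHomogeneous_monomial _ (degree_lowerExp (by omega)))
  · have := monomial_sub_monomial_notMem_span_of_degree_lt (R := K) (ptExp _)
      (eq_upperExp_or_eq_lowerExp hp) hdisj hne
    rwa [hup, ← toricMap_eq_aeval] at this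

/-- For every `p ≥ 4`, the minimal generating set of the toric
ideal `J_D` of the Ferrers diagram generated by the listed extremal points
contains a binomial of degree `p`: there is a homogeneous degree-`p` binomial
in `J_D` which does not lie in the subideal generated by the elements of `J_D`
of degree less than `p`. -/
theorem toric_ideal_has_degree_p_minimal_binomial
    (K : Type) [Field K] [CharZero K] (p : ℕ) (hp : 4 ≤ p) :
    ∃ f ∈ toricIdeal K (govDiagram p),
      (∃ A B : ↥(govDiagram p) →₀ ℕ, A ≠ B ∧
        f = MvPolynomial.monomial A (1 : K) - MvPolynomial.monomial B (1 : K)) ∧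
      f ∈ MvPolynomial.homogeneousSubmodule (↥(govDiagram p)) K p ∧
      f ∉ Ideal.span {g : MvPolynomial (↥(govDiagram p)) K |
        g ∈ toricIdeal K (govDiagram p) ∧
          ∃ d : ℕ, d < p ∧ g ∈ MvPolynomial.homogeneousSubmodule (↥(govDiagram p)) K d} :=
  toric_ideal_has_degree_p_minimal_binomial_general K p hp

end
end
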